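/- arXiv:1609.04744 — 3 statements merged into one kernel-verified Lean document; each statement's English description precedes it below -/
import Mathlib

section
/- Let α : P(E) → (−∞,∞] be a proper convex function with weakly compact sub-level sets and ρ(g) = sup_{ν ∈ P(E)} (∫ g dν − α(ν)) for measurable extended-real g (with the convention ∞ − ∞ := −∞ for integrals). If f : E → ℝ ∪ {∞} is measurable and bounded from below, then ρ(f) = lim_{m→∞} ρ(f ∧ m) = sup_{m > 0} ρ(f ∧ m). -/
/-! Truncating `f` at a level `n ≥ 0` leaves its negative part untouched, so for every `ν` the
monotone convergence theorem applied to the positive part gives `∫ (f ∧ n) dν ↑ ∫ f dν`; this also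
covers the case where the negative part has infinite integral, in which all these integrals are
`-∞`. In `EReal`, subtracting `α ν` commutes with suprema, so exchanging the suprema over `ν` and
`n` gives `ρ(f ∧ n) ↑ ρ(f)`; since `m ↦ ρ(f ∧ m)` is monotone, its limit and its supremum over
`m > 0` are this same value. -/

open MeasureTheory ProbabilityTheory Filter Topology Set
open scoped ENNReal NNReal

noncomputable section

namespace SanovDual

attribute [local instance] Classical.propDecidable

/-- The integral of an `EReal`-valued function, with the convention `∞ - ∞ := -∞`. -/
def erealIntegral {X : Type*} [MeasurableSpace X] (μ : Measure X) (f : X → EReal) : EReal :=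
  if (∫⁻ x, (if f x = ⊥ then ⊤ else ENNReal.ofReal (-(f x).toReal)) ∂μ) = ⊤ then ⊥
  else ((∫⁻ x, (if f x = ⊤ then ⊤ else ENNReal.ofReal ((f x).toReal)) ∂μ : ℝ≥0∞) : EReal)
      - ((∫⁻ x, (if f x = ⊥ then ⊤ else ENNReal.ofReal (-(f x).toReal)) ∂μ : ℝ≥0∞) : EReal)

/-- Extension of a function on probability measures to all measures (value `∞` elsewhere). -/
def extend {E : Type*} [MeasurableSpace E] (α : ProbabilityMeasure E → EReal)
    (μ : Measure E) : EReal :=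
  if h : IsProbabilityMeasure μ then α ⟨μ, h⟩ else ⊤

/-- The conditional law of the `k`-th coordinate given the first `k` coordinates (`0`-indexed:
given coordinates `0, …, k-1`), under a probability measure on `Fin n → E`. -/
def condLaw {E : Type*} [MeasurableSpace E] [TopologicalSpace E] [PolishSpace E] [BorelSpace E]
    [Nonempty E] (n : ℕ) (ν : ProbabilityMeasure (Fin n → E)) (k : Fin n) :
    Kernel (Fin (k : ℕ) → E) E :=
  Measure.condKernel ((ν : Measure (Fin n → E)).map
      (fun x => ((fun i : Fin (k : ℕ) => x (Fin.castLE k.isLt.le i)), x k)))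

/-- The functional `α_n` on `P(E^n)` built from `α` by summing `α` applied to the successive
conditional laws in the disintegration. -/
def alphan {E : Type*} [MeasurableSpace E] [TopologicalSpace E] [PolishSpace E] [BorelSpace E]
    [Nonempty E] (α : ProbabilityMeasure E → EReal) (n : ℕ)
    (ν : ProbabilityMeasure (Fin n → E)) : EReal :=
  ∑ k : Fin n, erealIntegral (ν : Measure (Fin n → E))
    (fun x => extend α (condLaw n ν k (fun i => x (Fin.castLE k.isLt.le i))))

/-- The convex conjugate `ρ_n` of `α_n`, acting on (extended-real-valued) functions on `E^n`. -/
def rhon {E : Type*} [MeasurableSpace E] [TopologicalSpace E] [PolishSpace E] [BorelSpace E]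
    [Nonempty E] (α : ProbabilityMeasure E → EReal) (n : ℕ) (f : (Fin n → E) → EReal) : EReal :=
  ⨆ ν : ProbabilityMeasure (Fin n → E), erealIntegral (ν : Measure (Fin n → E)) f - alphan α n ν

/-- `ρ = ρ₁` on bounded (real-valued) functions. -/
def rho {E : Type*} [MeasurableSpace E] (α : ProbabilityMeasure E → EReal) (f : E → ℝ) : EReal :=
  ⨆ ν : ProbabilityMeasure E, ((∫ x, f x ∂(ν : Measure E) : ℝ) : EReal) - α ν

/-- `ρ` on extended-real-valued functions, with the convention `∞ - ∞ := -∞` for integrals. -/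
def rhoE {E : Type*} [MeasurableSpace E] (α : ProbabilityMeasure E → EReal) (f : E → EReal) :
    EReal :=
  ⨆ ν : ProbabilityMeasure E, erealIntegral (ν : Measure E) f - α ν

/-- `ρ` on `[0,∞]`-valued functions. -/
def rhoNN {E : Type*} [MeasurableSpace E] (α : ProbabilityMeasure E → EReal) (g : E → ℝ≥0∞) :
    EReal :=
  ⨆ ν : ProbabilityMeasure E, ((∫⁻ x, g x ∂(ν : Measure E) : ℝ≥0∞) : EReal) - α ν

/-- The empirical measure `L_n(x) = n⁻¹ ∑ δ_{x_i}` as a measure. -/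
def empMeasure {E : Type*} [MeasurableSpace E] (n : ℕ) (x : Fin n → E) : Measure E :=
  (n : ℝ≥0∞)⁻¹ • ∑ i : Fin n, Measure.dirac (x i)

/-- The empirical measure `L_n(x)` as a probability measure (junk value for `n = 0`). -/
def empirical {E : Type*} [MeasurableSpace E] [Nonempty E] (n : ℕ) (x : Fin n → E) :
    ProbabilityMeasure E :=
  if h : IsProbabilityMeasure (empMeasure n x) then ⟨empMeasure n x, h⟩
  else ⟨Measure.dirac (Classical.arbitrary E), inferInstance⟩

/-- `P_ψ(E)`, the probability measures integrating `ψ`. -/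
def Pw (E : Type*) [MeasurableSpace E] (ψ : E → ℝ) : Type _ :=
  {ν : ProbabilityMeasure E // ∫⁻ x, ENNReal.ofReal (ψ x) ∂(ν : Measure E) ≠ ⊤}

/-- The underlying probability measure of an element of `P_ψ(E)`. -/
def Pw.toProb {E : Type*} [MeasurableSpace E] {ψ : E → ℝ} (ν : Pw E ψ) :
    ProbabilityMeasure E :=
  Subtype.val ν

/-- The `ψ`-weak topology on `P_ψ(E)`: the topology generated by the maps `ν ↦ ∫ f dν` over
continuous `f : E → ℝ` with `|f| ≤ 1 + ψ`. -/
instance {E : Type*} [MeasurableSpace E] [TopologicalSpace E] (ψ : E → ℝ) :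
    TopologicalSpace (Pw E ψ) :=
  ⨅ (f : E → ℝ) (_ : Continuous f) (_ : ∀ x, |f x| ≤ 1 + ψ x),
    TopologicalSpace.induced (fun ν : Pw E ψ => ∫ x, f x ∂(ν.toProb : Measure E)) inferInstance

/-- Lift a function on `P_ψ(E)` to one on `P(E)` (junk value `⊤` off `P_ψ(E)`). -/
def liftPw {E : Type*} [MeasurableSpace E] (ψ : E → ℝ) (F : Pw E ψ → EReal)
    (ν : ProbabilityMeasure E) : EReal :=
  if h : ∫⁻ x, ENNReal.ofReal (ψ x) ∂(ν : Measure E) ≠ ⊤ then F ⟨ν, h⟩ else ⊤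

/-- The canonical map `EReal → ℝ≥0∞`. -/
def erealToENNReal (x : EReal) : ℝ≥0∞ :=
  if x = ⊤ then ⊤ else ENNReal.ofReal x.toReal

instance {E : Type*} [MeasurableSpace E] : MeasurableSpace (ProbabilityMeasure E) :=
  Subtype.instMeasurableSpace

-- No condition on `c`: `x - ⊥ = ⊤` for `x ≠ ⊥`, and `x - ⊤ = ⊥`.
theorem _root_.EReal.iSup_sub {ι : Sort*} (g : ι → EReal) (c : EReal) :
    (⨆ i, g i) - c = ⨆ i, (g i - c) := by
  refine le_antisymm ?_ (iSup_le fun i => EReal.sub_le_sub (le_iSup g i) le_rfl)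
  induction c using EReal.rec with
  | bot =>
    rcases eq_or_ne (⨆ i, g i) ⊥ with h | h
    · simp [h]
    · obtain ⟨i, hi⟩ : ∃ i, g i ≠ ⊥ := by simpa [iSup_eq_bot] using h
      exact le_iSup_of_le i (by rw [EReal.sub_bot hi]; exact le_top)
  | coe c =>
    rw [EReal.sub_le_iff_le_add (.inl (EReal.coe_ne_bot c)) (.inl (EReal.coe_ne_top c))]
    refine iSup_le fun i => ?_
    calc g i = g i - c + c := EReal.sub_add_cancel.symm
      _ ≤ (⨆ i, (g i - c)) + c := add_le_add_left (le_iSup (fun i => g i - c) i) _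
  | top => simp

theorem _root_.EReal.toENNReal_neg_inf_of_nonneg {a b : EReal} (hb : 0 ≤ b) :
    (-(a ⊓ b)).toENNReal = (-a).toENNReal := by
  rcases le_total a b with hab | hba
  · rw [inf_eq_left.2 hab]
  · rw [inf_eq_right.2 hba, EReal.toENNReal_of_nonpos (EReal.neg_le.1 (by simpa using hb)),
      EReal.toENNReal_of_nonpos (EReal.neg_le.1 (by simpa using hb.trans hba))]

theorem _root_.EReal.iSup_toENNReal_inf_natCast (a : EReal) :
    ⨆ n : ℕ, (a ⊓ n).toENNReal = a.toENNReal := by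
  refine le_antisymm (iSup_le fun n => EReal.toENNReal_le_toENNReal inf_le_left) ?_
  rcases eq_or_ne a ⊤ with rfl | ha
  · have h (n : ℕ) : ((⊤ : EReal) ⊓ n).toENNReal = n := by
      rw [top_inf_eq, ← EReal.coe_natCast, EReal.real_coe_toENNReal, ENNReal.ofReal_natCast]
    simp only [h, ENNReal.iSup_natCast, EReal.toENNReal_top, le_refl]
  · obtain ⟨n, hn⟩ := EReal.exists_nat_ge_mul ha 1
    rw [Nat.cast_one, mul_one] at hn
    exact le_iSup_of_le n (by rw [inf_eq_left.2 hn])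

section erealIntegral

variable {X : Type*} [MeasurableSpace X] (μ : Measure X)

theorem erealIntegral_eq_lintegral_toENNReal (f : X → EReal) :
    erealIntegral μ f =
      if ∫⁻ x, (-f x).toENNReal ∂μ = ∞ then ⊥
      else (∫⁻ x, (f x).toENNReal ∂μ : EReal) - (∫⁻ x, (-f x).toENNReal ∂μ : EReal) := by
  have hneg (a : EReal) : (if a = ⊥ then ∞ else ENNReal.ofReal (-a.toReal)) = (-a).toENNReal := by
    rcases eq_or_ne a ⊥ with rfl | ha
    · simp
    · rw [if_neg ha, EReal.toENNReal_of_ne_top (by simpa using ha), EReal.toReal_neg_eq]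
  have hpos (a : EReal) : (if a = ⊤ then ∞ else ENNReal.ofReal a.toReal) = a.toENNReal := by
    rcases eq_or_ne a ⊤ with rfl | ha
    · simp
    · rw [if_neg ha, EReal.toENNReal_of_ne_top ha]
  simp only [erealIntegral, hneg, hpos]

variable {μ}

theorem erealIntegral_mono {f g : X → EReal} (h : ∀ x, f x ≤ g x) :
    erealIntegral μ f ≤ erealIntegral μ g := by
  have hpos : ∫⁻ x, (f x).toENNReal ∂μ ≤ ∫⁻ x, (g x).toENNReal ∂μ :=
    lintegral_mono fun x => EReal.toENNReal_le_toENNReal (h x)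
  have hneg : ∫⁻ x, (-g x).toENNReal ∂μ ≤ ∫⁻ x, (-f x).toENNReal ∂μ :=
    lintegral_mono fun x => EReal.toENNReal_le_toENNReal (EReal.neg_le_neg_iff.2 (h x))
  simp only [erealIntegral_eq_lintegral_toENNReal]
  split_ifs with hf hg hg
  · exact le_rfl
  · exact bot_le
  · exact absurd (top_le_iff.1 (hg ▸ hneg)) hf
  · exact EReal.sub_le_sub (EReal.coe_ennreal_le_coe_ennreal_iff.2 hpos)
      (EReal.coe_ennreal_le_coe_ennreal_iff.2 hneg)

theorem erealIntegral_eq_iSup_inf_natCast {f : X → EReal} (hf : Measurable f) :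
    erealIntegral μ f = ⨆ n : ℕ, erealIntegral μ (fun x => f x ⊓ n) := by
  have hneg (n : ℕ) : ∫⁻ x, (-(f x ⊓ n)).toENNReal ∂μ = ∫⁻ x, (-f x).toENNReal ∂μ :=
    lintegral_congr fun x => EReal.toENNReal_neg_inf_of_nonneg (Nat.cast_nonneg' n)
  have hpos : ∫⁻ x, (f x).toENNReal ∂μ = ⨆ n : ℕ, ∫⁻ x, (f x ⊓ n).toENNReal ∂μ := by
    rw [← lintegral_iSup (fun n => (hf.min measurable_const).ereal_toENNReal)
      fun m n hmn x => EReal.toENNReal_le_toENNReal (inf_le_inf_left _ (by exact_mod_cast hmn))]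
    simp only [EReal.iSup_toENNReal_inf_natCast]
  simp only [erealIntegral_eq_lintegral_toENNReal, hneg]
  split_ifs
  · simp
  · rw [hpos, Monotone.map_ciSup_of_continuousAt continuous_coe_ennreal_ereal.continuousAt
      EReal.coe_ennreal_strictMono.monotone, EReal.iSup_sub]

end erealIntegral

section rhoE

variable {E : Type*} [MeasurableSpace E] (α : ProbabilityMeasure E → EReal)

theorem rhoE_mono {f g : E → EReal} (h : ∀ x, f x ≤ g x) : rhoE α f ≤ rhoE α g :=
  iSup_mono fun _ => EReal.sub_le_sub (erealIntegral_mono h) le_rfl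

theorem rhoE_eq_iSup_inf_natCast {f : E → EReal} (hf : Measurable f) :
    rhoE α f = ⨆ n : ℕ, rhoE α fun x => f x ⊓ n := by
  simp only [rhoE, erealIntegral_eq_iSup_inf_natCast hf, EReal.iSup_sub]
  exact iSup_comm

end rhoE

theorem extended_duality_general
    {E : Type*} [MeasurableSpace E]
    (α : ProbabilityMeasure E → EReal)
    (f : E → EReal) (hfmeas : Measurable f) :
    Filter.Tendsto (fun m : ℝ => rhoE α fun x => f x ⊓ (m : EReal)) Filter.atTop
      (𝓝 (rhoE α f)) ∧
    rhoE α f = ⨆ (m : ℝ) (_ : 0 < m), rhoE α fun x => f x ⊓ (m : EReal) := by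
  set F : ℝ → EReal := fun m => rhoE α fun x => f x ⊓ (m : EReal)
  have hF_mono : Monotone F := fun m m' h =>
    rhoE_mono α fun x => inf_le_inf_left _ (EReal.coe_le_coe_iff.2 h)
  have hF_iSup : ⨆ m, F m = rhoE α f := by
    rw [rhoE_eq_iSup_inf_natCast α hfmeas]
    exact (hF_mono.iSup_comp_eq (s := fun n : ℕ => (n : ℝ)) fun m => exists_nat_ge m).symm
  have hF_iSup_pos : ⨆ (m : ℝ) (_ : 0 < m), F m = ⨆ m, F m := by
    rw [iSup_subtype']
    exact hF_mono.iSup_comp_eq fun m => ⟨⟨max m 1, by positivity⟩, le_max_left m 1⟩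
  exact ⟨hF_iSup ▸ tendsto_atTop_iSup hF_mono, by rw [hF_iSup_pos, hF_iSup]⟩

/-- **Lemma 2.5** (extension of `ρ` to unbounded functions by truncation from above): for
measurable `f : E → ℝ ∪ {∞}` bounded from below, `ρ(f) = lim_m ρ(f ∧ m) = sup_{m>0} ρ(f ∧ m)`. -/
theorem extended_duality
    {E : Type*} [MeasurableSpace E] [TopologicalSpace E] [PolishSpace E] [BorelSpace E]
    [Nonempty E]
    (α : ProbabilityMeasure E → EReal)
    (hproper : ∃ ν, α ν ≠ ⊤) (hbot : ∀ ν, α ν ≠ ⊥)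
    (hconvex : ∀ (μ₁ μ₂ : ProbabilityMeasure E) (t : ℝ≥0), t ≤ 1 →
      extend α ((t : ℝ≥0∞) • (μ₁ : Measure E) + ((1 - t : ℝ≥0) : ℝ≥0∞) • (μ₂ : Measure E))
        ≤ ((t : ℝ) : EReal) * α μ₁ + (((1 - t : ℝ≥0) : ℝ) : EReal) * α μ₂)
    (hcompact : ∀ c : ℝ, IsCompact {ν : ProbabilityMeasure E | α ν ≤ (c : EReal)})
    (f : E → EReal) (hfmeas : Measurable f) (hbdd : ∃ C : ℝ, ∀ x, (C : EReal) ≤ f x) :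
    Filter.Tendsto (fun m : ℝ => rhoE α fun x => f x ⊓ (m : EReal)) Filter.atTop
      (𝓝 (rhoE α f)) ∧
    rhoE α f = ⨆ (m : ℝ) (_ : 0 < m), rhoE α fun x => f x ⊓ (m : EReal) :=
  extended_duality_general α f hfmeas

end SanovDual
end
end

section
/- Let ψ : E → [0,∞) be continuous and suppose the strong Cramér condition holds: lim_{m→∞} ρ(λ ψ 1_{{ψ ≥ m}}) = ρ(0) for every λ > 0. Then for each c ∈ ℝ, the sub-level set {ν ∈ P(E) : α(ν) ≤ c} is contained in P_ψ(E), the weak and ψ-weak topologies coincide on it, and in particular every sub-level set of α is ψ-weakly compact. -/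
open MeasureTheory ProbabilityTheory Filter Topology Set
open scoped ENNReal NNReal

noncomputable section

namespace SanovDual

attribute [local instance] Classical.propDecidable

/-!
Since `α` has compact sub-level sets and never takes the value `-∞`, it is bounded below, so
`ρ(0) < ∞`. The Fenchel–Young inequality `λ ∫_{ψ ≥ m} ψ dν ≤ ρ(λ ψ 1_{ψ ≥ m}) + α(ν)` and the strong
Cramér condition then make the tails `∫_{ψ ≥ m} ψ dν` small uniformly on each sub-level set
`{α ≤ c}`. With uniformly small tails, `ν ↦ ∫ f dν` is a uniform limit on `{α ≤ c}` of the
weakly continuous maps `ν ↦ ∫ (f ∧ n) ∨ (-n) dν` whenever `f` is continuous with `|f| ≤ 1 + ψ`.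
So on `{α ≤ c}` the `ψ`-weak topology is no finer than the weak one, and weak compactness of
`{α ≤ c}` transfers to the `ψ`-weak topology.
-/

open scoped BoundedContinuousFunction

theorem exists_real_le_of_isCompact_sublevel {X : Type*} [TopologicalSpace X] [T2Space X]
    (f : X → EReal) (hf : ∀ x, f x ≠ ⊥) (hcompact : ∀ c : ℝ, IsCompact {x | f x ≤ (c : EReal)}) :
    ∃ B : ℝ, ∀ x, (B : EReal) ≤ f x := by
  by_contra! hunbdd
  obtain ⟨x, hx⟩ := IsCompact.nonempty_iInter_of_sequence_nonempty_isCompact_isClosed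
    (fun n : ℕ => {x | f x ≤ ((-n : ℝ) : EReal)})
    (fun n x hx => hx.trans (EReal.coe_le_coe_iff.2 (by push_cast; linarith)))
    (fun n => (hunbdd _).imp fun _ => le_of_lt) (hcompact _) (fun n => (hcompact _).isClosed)
  refine hf x ((EReal.eq_bot_iff_forall_lt _).2 fun y => ?_)
  obtain ⟨n, hn⟩ := exists_nat_gt (-y)
  exact (mem_iInter.1 hx n).trans_lt (EReal.coe_lt_coe_iff.2 (by linarith))

theorem abs_sub_max_min_le {a b n : ℝ} (hn : 1 ≤ n) (hb : 0 ≤ b) (ha : |a| ≤ 1 + b) :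
    |a - max (min a n) (-n)| ≤ b := by
  rw [abs_le] at ha ⊢
  constructor <;> rcases max_cases (min a n) (-n) with h | h <;>
    rcases min_cases a n with h' | h' <;> linarith

theorem max_min_neg_eq_self {a n : ℝ} (ha : |a| ≤ n) : max (min a n) (-n) = a := by
  rw [min_eq_left (le_of_abs_le ha), max_eq_left (neg_le_of_abs_le ha)]

theorem integrable_of_abs_le_one_add {E : Type*} [MeasurableSpace E] {μ : Measure E}
    [IsFiniteMeasure μ] {f ψ : E → ℝ} (hf : AEStronglyMeasurable f μ)
    (hfψ : ∀ x, |f x| ≤ 1 + ψ x) (hψ : ∫⁻ x, ENNReal.ofReal (ψ x) ∂μ ≠ ⊤) : Integrable f μ := by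
  refine ⟨hf, ?_⟩
  calc ∫⁻ x, ‖f x‖ₑ ∂μ ≤ ∫⁻ x, (1 + ENNReal.ofReal (ψ x)) ∂μ := lintegral_mono fun x => by
        rw [Real.enorm_eq_ofReal_abs, ← ENNReal.ofReal_one]
        exact (ENNReal.ofReal_le_ofReal (hfψ x)).trans ENNReal.ofReal_add_le
    _ < ⊤ := by
        rw [lintegral_add_left measurable_const, lintegral_const]
        exact ENNReal.add_lt_top.2 ⟨by simp, hψ.lt_top⟩

section Conjugate

variable {E : Type*} [MeasurableSpace E] (α : ProbabilityMeasure E → EReal)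

theorem rhoNN_zero_ne_top (hα : ∃ B : ℝ, ∀ ν, (B : EReal) ≤ α ν) :
    rhoNN α (fun _ => 0) ≠ ⊤ := by
  obtain ⟨B, hB⟩ := hα
  refine ne_top_of_le_ne_top (EReal.coe_ne_top (-B)) (iSup_le fun ν => ?_)
  calc ((∫⁻ _, (0 : ℝ≥0∞) ∂(ν : Measure E) : ℝ≥0∞) : EReal) - α ν ≤ 0 - (B : EReal) := by
        rw [lintegral_zero]; exact EReal.sub_le_sub le_rfl (hB ν)
    _ = ((-B : ℝ) : EReal) := by simp

theorem lintegral_le_of_rhoNN_le {g : E → ℝ≥0∞} {K c : ℝ} (hg : rhoNN α g ≤ K)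
    {ν : ProbabilityMeasure E} (hν : α ν ≤ c) :
    ∫⁻ x, g x ∂(ν : Measure E) ≤ ENNReal.ofReal (K + c) := by
  have hsub : ((∫⁻ x, g x ∂(ν : Measure E) : ℝ≥0∞) : EReal) - c ≤ K :=
    (EReal.sub_le_sub le_rfl hν).trans ((le_iSup (fun ν : ProbabilityMeasure E =>
      ((∫⁻ x, g x ∂(ν : Measure E) : ℝ≥0∞) : EReal) - α ν) ν).trans hg)
  have hle : ((∫⁻ x, g x ∂(ν : Measure E) : ℝ≥0∞) : EReal) ≤ ((K + c : ℝ) : EReal) := by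
    rw [EReal.coe_add]
    exact (EReal.sub_le_iff_le_add (.inl (EReal.coe_ne_bot c)) (.inl (EReal.coe_ne_top c))).1 hsub
  simpa only [EReal.toENNReal_coe, EReal.real_coe_toENNReal] using EReal.toENNReal_le_toENNReal hle

end Conjugate

section Tails

variable {E : Type*} [MeasurableSpace E]

def UniformlyIntegrableTails (ψ : E → ℝ) (S : Set (ProbabilityMeasure E)) : Prop :=
  ∀ ε : ℝ, 0 < ε → ∃ M : ℝ, ∀ m, M ≤ m → ∀ ν ∈ S,
    ∫⁻ x, {x | m ≤ ψ x}.indicator (fun x => ENNReal.ofReal (ψ x)) x ∂(ν : Measure E)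
      ≤ ENNReal.ofReal ε

theorem uniformlyIntegrableTails_sublevel (α : ProbabilityMeasure E → EReal)
    (hα : rhoNN α (fun _ => 0) ≠ ⊤) (ψ : E → ℝ)
    (hsc : ∀ lam : ℝ, 0 < lam →
      Tendsto
        (fun m : ℝ => rhoNN α ({x | m ≤ ψ x}.indicator fun x => ENNReal.ofReal (lam * ψ x)))
        atTop (𝓝 (rhoNN α fun _ => 0)))
    (c : ℝ) : UniformlyIntegrableTails ψ {ν | α ν ≤ c} := by
  intro ε hε
  -- For large `m`, `K` bounds `ρ(λ ψ 1_{ψ ≥ m})` whatever `λ` is: a large `λ` makes tails small.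
  obtain ⟨K, hK, -⟩ := EReal.lt_iff_exists_real_btwn.1 (lt_top_iff_ne_top.2 hα)
  set lam := (|K + c| + 1) / ε with hlam_def
  have hlam : 0 < lam := by positivity
  obtain ⟨M, hM⟩ := eventually_atTop.1 ((hsc lam hlam).eventually_lt_const hK)
  refine ⟨M, fun m hm ν hν => ?_⟩
  set L := ∫⁻ x, {x | m ≤ ψ x}.indicator (fun x => ENNReal.ofReal (ψ x)) x ∂(ν : Measure E)
  have hscaled : ENNReal.ofReal lam * L ≤ ENNReal.ofReal (K + c) := by
    rw [← lintegral_const_mul' _ _ ENNReal.ofReal_ne_top]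
    simpa only [ENNReal.ofReal_mul hlam.le, Set.indicator_const_mul]
      using lintegral_le_of_rhoNN_le α (hM m hm).le hν
  calc L ≤ ENNReal.ofReal (K + c) / ENNReal.ofReal lam :=
        (ENNReal.le_div_iff_mul_le (.inl (ENNReal.ofReal_pos.2 hlam).ne')
          (.inl ENNReal.ofReal_ne_top)).2 (mul_comm L _ ▸ hscaled)
    _ = ENNReal.ofReal ((K + c) / lam) := (ENNReal.ofReal_div_of_pos hlam).symm
    _ ≤ ENNReal.ofReal ε := by
        refine ENNReal.ofReal_le_ofReal ((div_le_iff₀ hlam).2 ?_)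
        rw [hlam_def, mul_div_cancel₀ _ hε.ne']
        linarith [le_abs_self (K + c)]

theorem UniformlyIntegrableTails.lintegral_ne_top {ψ : E → ℝ} {S : Set (ProbabilityMeasure E)}
    (h : UniformlyIntegrableTails ψ S) {ν : ProbabilityMeasure E} (hν : ν ∈ S) :
    ∫⁻ x, ENNReal.ofReal (ψ x) ∂(ν : Measure E) ≠ ⊤ := by
  obtain ⟨M, hM⟩ := h 1 one_pos
  have hpt : ∀ x, ENNReal.ofReal (ψ x)
      ≤ {x | M ≤ ψ x}.indicator (fun x => ENNReal.ofReal (ψ x)) x + ENNReal.ofReal M := by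
    intro x
    by_cases hx : M ≤ ψ x
    · simp [hx]
    · simpa [hx] using ENNReal.ofReal_le_ofReal (not_le.1 hx).le
  refine ne_top_of_le_ne_top ?_ (lintegral_mono hpt)
  rw [lintegral_add_right _ measurable_const, lintegral_const]
  exact ENNReal.add_ne_top.2 ⟨ne_top_of_le_ne_top ENNReal.ofReal_ne_top (hM M le_rfl ν hν),
    ENNReal.mul_ne_top ENNReal.ofReal_ne_top (measure_ne_top _ _)⟩

theorem UniformlyIntegrableTails.continuousOn_integral [TopologicalSpace E]
    [OpensMeasurableSpace E] {ψ : E → ℝ} {S : Set (ProbabilityMeasure E)}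
    (h : UniformlyIntegrableTails ψ S) {f : E → ℝ} (hf : Continuous f)
    (hfψ : ∀ x, |f x| ≤ 1 + ψ x) :
    ContinuousOn (fun ν : ProbabilityMeasure E => ∫ x, f x ∂(ν : Measure E)) S := by
  have htrunc : ∀ n : ℕ, ∃ g : E →ᵇ ℝ, ∀ x, g x = max (min (f x) n) (-n) := fun n =>
    ⟨.ofNormedAddCommGroup _ ((hf.min continuous_const).max continuous_const) n fun x => by
      rw [Real.norm_eq_abs, abs_le]
      exact ⟨le_max_right _ _, max_le (min_le_right _ _) (neg_le_self n.cast_nonneg)⟩, fun _ => rfl⟩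
  choose g hg using htrunc
  refine TendstoUniformlyOn.continuousOn
    (F := fun n (ν : ProbabilityMeasure E) => ∫ x, g n x ∂(ν : Measure E)) (p := atTop) ?_
    (.of_forall fun n =>
      (ProbabilityMeasure.continuous_integral_boundedContinuousFunction (g n)).continuousOn)
  rw [Metric.tendstoUniformlyOn_iff]
  intro ε hε
  obtain ⟨M, hM⟩ := h (ε / 2) (half_pos hε)
  filter_upwards [eventually_ge_atTop (⌈M⌉₊ + 1)] with n hn ν hν
  have hn' : ((⌈M⌉₊ + 1 : ℕ) : ℝ) ≤ n := by exact_mod_cast hn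
  push_cast at hn'
  have hMn : M ≤ (n : ℝ) - 1 := by linarith [Nat.le_ceil M]
  have hn1 : (1 : ℝ) ≤ n := by linarith [(⌈M⌉₊).cast_nonneg (α := ℝ)]
  have hfint := integrable_of_abs_le_one_add (μ := (ν : Measure E)) hf.aestronglyMeasurable hfψ
    (h.lintegral_ne_top hν)
  have hpt : ∀ x, ENNReal.ofReal ‖f x - g n x‖
      ≤ {x | (n : ℝ) - 1 ≤ ψ x}.indicator (fun x => ENNReal.ofReal (ψ x)) x := fun x => by
    rw [hg, Real.norm_eq_abs]
    by_cases hx : (n : ℝ) - 1 ≤ ψ x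
    · rw [Set.indicator_of_mem (show x ∈ {x | (n : ℝ) - 1 ≤ ψ x} from hx)]
      exact ENNReal.ofReal_le_ofReal (abs_sub_max_min_le hn1 (by linarith) (hfψ x))
    · rw [Set.indicator_of_notMem (show x ∉ {x | (n : ℝ) - 1 ≤ ψ x} from hx),
        max_min_neg_eq_self (by linarith [hfψ x])]
      simp
  calc dist (∫ x, f x ∂(ν : Measure E)) (∫ x, g n x ∂(ν : Measure E))
      = ‖∫ x, (f x - g n x) ∂(ν : Measure E)‖ := by
        rw [dist_eq_norm, integral_sub hfint ((g n).integrable _)]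
    _ ≤ (∫⁻ x, ENNReal.ofReal ‖f x - g n x‖ ∂(ν : Measure E)).toReal :=
        norm_integral_le_lintegral_norm _
    _ ≤ (ENNReal.ofReal (ε / 2)).toReal :=
        ENNReal.toReal_mono ENNReal.ofReal_ne_top
          ((lintegral_mono hpt).trans (hM _ hMn ν hν))
    _ < ε := by rw [ENNReal.toReal_ofReal (by positivity)]; linarith

end Tails

section Pw

variable {E : Type*} [MeasurableSpace E] [TopologicalSpace E] {ψ : E → ℝ}

theorem Pw.continuous_integral {f : E → ℝ} (hf : Continuous f) (hfψ : ∀ x, |f x| ≤ 1 + ψ x) :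
    Continuous fun ν : Pw E ψ => ∫ x, f x ∂(ν.toProb : Measure E) :=
  continuous_iInf_dom (i := f) <| continuous_iInf_dom (i := hf) <|
    continuous_iInf_dom (i := hfψ) continuous_induced_dom

theorem Pw.continuous_iff {X : Type*} [TopologicalSpace X] {T : X → Pw E ψ} :
    Continuous T ↔ ∀ f : E → ℝ, Continuous f → (∀ x, |f x| ≤ 1 + ψ x) →
      Continuous fun x => ∫ y, f y ∂((T x).toProb : Measure E) := by
  simp only [continuous_iInf_rng (t₂ := fun _ => _), continuous_induced_rng]
  rfl

theorem Pw.continuous_toProb [OpensMeasurableSpace E] (hψ : ∀ x, 0 ≤ ψ x) :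
    Continuous (Pw.toProb : Pw E ψ → ProbabilityMeasure E) := by
  refine ProbabilityMeasure.continuous_iff_forall_continuous_integral.2 fun g => ?_
  set R : ℝ := ‖g‖ + 1
  have hR : 0 < R := by positivity
  have hgR : ∀ x, |R⁻¹ * g x| ≤ 1 + ψ x := fun x => by
    rw [abs_mul, abs_inv, abs_of_pos hR, inv_mul_le_iff₀ hR]
    have := (Real.norm_eq_abs _ ▸ g.norm_coe_le_norm x : |g x| ≤ ‖g‖)
    nlinarith [hψ x, norm_nonneg g]
  have hscaled := (Pw.continuous_integral (f := fun x => R⁻¹ * g x)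
    (continuous_const.mul g.continuous) hgR).const_mul R
  refine hscaled.congr fun ν => ?_
  rw [integral_const_mul, ← mul_assoc, mul_inv_cancel₀ hR.ne', one_mul]

theorem UniformlyIntegrableTails.continuous_of_continuous_toProb [OpensMeasurableSpace E]
    {S : Set (ProbabilityMeasure E)} (h : UniformlyIntegrableTails ψ S) {X : Type*}
    [TopologicalSpace X] {T : X → Pw E ψ} (hT : Continuous fun x => (T x).toProb)
    (hTS : ∀ x, (T x).toProb ∈ S) : Continuous T :=
  Pw.continuous_iff.2 fun _ hf hfψ => (h.continuousOn_integral hf hfψ).comp_continuous hT hTS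

end Pw

theorem strong_cramer_topologies_general
    {E : Type*} [MeasurableSpace E] [TopologicalSpace E] [PolishSpace E] [BorelSpace E]
    (α : ProbabilityMeasure E → EReal)
    (hbot : ∀ ν, α ν ≠ ⊥)
    (hcompact : ∀ c : ℝ, IsCompact {ν : ProbabilityMeasure E | α ν ≤ (c : EReal)})
    (ψ : E → ℝ) (hψ0 : ∀ x, 0 ≤ ψ x)
    (hsc : ∀ lam : ℝ, 0 < lam →
      Filter.Tendsto
        (fun m : ℝ => rhoNN α ({x | m ≤ ψ x}.indicator fun x => ENNReal.ofReal (lam * ψ x)))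
        Filter.atTop (𝓝 (rhoNN α fun _ => 0))) :
    ∀ c : ℝ,
      (∀ ν : ProbabilityMeasure E, α ν ≤ (c : EReal) →
        ∫⁻ x, ENNReal.ofReal (ψ x) ∂(ν : Measure E) ≠ ⊤) ∧
      (TopologicalSpace.induced
          (fun ν : {ν : Pw E ψ // α ν.toProb ≤ (c : EReal)} => ν.1) inferInstance =
        TopologicalSpace.induced
          (fun ν : {ν : Pw E ψ // α ν.toProb ≤ (c : EReal)} => ν.1.toProb) inferInstance) ∧
      IsCompact {ν : Pw E ψ | α ν.toProb ≤ (c : EReal)} := by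
  intro c
  have hS : UniformlyIntegrableTails ψ {ν | α ν ≤ c} :=
    uniformlyIntegrableTails_sublevel α
      (rhoNN_zero_ne_top α (exists_real_le_of_isCompact_sublevel α hbot hcompact)) ψ hsc c
  refine ⟨fun _ hν => hS.lintegral_ne_top hν, le_antisymm ?_ ?_, ?_⟩
  · exact continuous_iff_le_induced.1 ((Pw.continuous_toProb hψ0).comp continuous_subtype_val)
  · let _ : TopologicalSpace {ν : Pw E ψ // α ν.toProb ≤ c} :=
      .induced (fun ν => ν.1.toProb) inferInstance
    exact continuous_iff_le_induced.1
      (hS.continuous_of_continuous_toProb continuous_induced_dom fun ν => ν.2)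
  · have : CompactSpace {ν : ProbabilityMeasure E // α ν ≤ c} :=
      isCompact_iff_compactSpace.1 (hcompact c)
    let lift (ν : {ν : ProbabilityMeasure E // α ν ≤ c}) : Pw E ψ :=
      ⟨ν.1, hS.lintegral_ne_top ν.2⟩
    have hrange : {ν : Pw E ψ | α ν.toProb ≤ c} = range lift :=
      Set.ext fun ν => ⟨fun hν => ⟨⟨ν.toProb, hν⟩, rfl⟩, by rintro ⟨ν', rfl⟩; exact ν'.2⟩
    rw [hrange]
    exact isCompact_range (hS.continuous_of_continuous_toProb continuous_subtype_val fun ν => ν.2)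

/-- **Proposition 2.12**: under the strong Cramér condition, the weak and `ψ`-weak topologies
coincide on each sub-level set of `α`; in particular sub-level sets are `ψ`-weakly compact. -/
theorem strong_cramer_topologies
    {E : Type*} [MeasurableSpace E] [TopologicalSpace E] [PolishSpace E] [BorelSpace E]
    [Nonempty E]
    (α : ProbabilityMeasure E → EReal)
    (hproper : ∃ ν, α ν ≠ ⊤) (hbot : ∀ ν, α ν ≠ ⊥)
    (hconvex : ∀ (μ₁ μ₂ : ProbabilityMeasure E) (t : ℝ≥0), t ≤ 1 →
      extend α ((t : ℝ≥0∞) • (μ₁ : Measure E) + ((1 - t : ℝ≥0) : ℝ≥0∞) • (μ₂ : Measure E))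
        ≤ ((t : ℝ) : EReal) * α μ₁ + (((1 - t : ℝ≥0) : ℝ) : EReal) * α μ₂)
    (hcompact : ∀ c : ℝ, IsCompact {ν : ProbabilityMeasure E | α ν ≤ (c : EReal)})
    (ψ : E → ℝ) (hψc : Continuous ψ) (hψ0 : ∀ x, 0 ≤ ψ x)
    (hsc : ∀ lam : ℝ, 0 < lam →
      Filter.Tendsto
        (fun m : ℝ => rhoNN α ({x | m ≤ ψ x}.indicator fun x => ENNReal.ofReal (lam * ψ x)))
        Filter.atTop (𝓝 (rhoNN α fun _ => 0))) :
    ∀ c : ℝ,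
      (∀ ν : ProbabilityMeasure E, α ν ≤ (c : EReal) →
        ∫⁻ x, ENNReal.ofReal (ψ x) ∂(ν : Measure E) ≠ ⊤) ∧
      (TopologicalSpace.induced
          (fun ν : {ν : Pw E ψ // α ν.toProb ≤ (c : EReal)} => ν.1) inferInstance =
        TopologicalSpace.induced
          (fun ν : {ν : Pw E ψ // α ν.toProb ≤ (c : EReal)} => ν.1.toProb) inferInstance) ∧
      IsCompact {ν : Pw E ψ | α ν.toProb ≤ (c : EReal)} :=
  strong_cramer_topologies_general α hbot hcompact ψ hψ0 hsc

end SanovDual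
end
end

section
/- Let (E,‖·‖) be a separable Banach space and ψ(x) = ‖x‖. Suppose the sub-level sets of α are pre-compact subsets of P_ψ(E). Define Ψ(x) = inf{ α(ν) : ν ∈ P_ψ(E), ∫_E z ν(dz) = x } for x ∈ E (Bochner integral), and Ψ*(x*) = sup_{x ∈ E} (⟨x*, x⟩ − Ψ(x)) for x* in the continuous dual E*. Then Ψ is convex and lower semicontinuous, Ψ*(x*) = ρ(x*) for every x* ∈ E* (viewing x* as a function on E), and consequently Ψ(x) = sup_{x* ∈ E*} (⟨x*, x⟩ − ρ(x*)) for every x ∈ E. -/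
open MeasureTheory ProbabilityTheory Filter Topology Set
open scoped ENNReal NNReal

noncomputable section

namespace SanovDual

attribute [local instance] Classical.propDecidable

/-- The function `Ψ(x) = inf {α(ν) : ν ∈ P_ψ(E), ∫ z ν(dz) = x}` (Bochner integral),
for `ψ = ‖·‖`. -/
def meanInfAlpha {E : Type*} [NormedAddCommGroup E] [NormedSpace ℝ E] [MeasurableSpace E]
    (α : ProbabilityMeasure E → EReal) (x : E) : EReal :=
  ⨅ (ν : Pw E fun z => ‖z‖) (_ : (∫ z, z ∂(ν.toProb : Measure E)) = x), α ν.toProb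


/-! ### Auxiliary lemmas -/

section Aux

lemma EReal.coe_ennreal_eq_toReal {a : ℝ≥0∞} (h : a ≠ ⊤) :
    (a : EReal) = ((a.toReal : ℝ) : EReal) := by
  lift a to ℝ≥0 using h
  rw [EReal.coe_nnreal_eq_coe_real, ENNReal.coe_toReal]

variable {X : Type*} [MeasurableSpace X] {μ : Measure X}

lemma lintegral_ofReal_ne_top_of_integrable {g : X → ℝ} (hg : Integrable g μ) :
    ∫⁻ x, ENNReal.ofReal (g x) ∂μ ≠ ⊤ := by
  have h2 := hg.hasFiniteIntegral
  rw [hasFiniteIntegral_iff_norm] at h2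
  refine ne_top_of_le_ne_top h2.ne (lintegral_mono fun x => ?_)
  rw [Real.norm_eq_abs]
  exact ENNReal.ofReal_le_ofReal (le_abs_self _)

lemma erealIntegral_real {g : X → ℝ} (hg : Integrable g μ) :
    erealIntegral μ (fun x => ((g x : ℝ) : EReal)) = ((∫ x, g x ∂μ : ℝ) : EReal) := by
  have hpos : ∫⁻ x, ENNReal.ofReal (g x) ∂μ ≠ ⊤ := lintegral_ofReal_ne_top_of_integrable hg
  have hneg : ∫⁻ x, ENNReal.ofReal (-(g x)) ∂μ ≠ ⊤ :=
    lintegral_ofReal_ne_top_of_integrable hg.neg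
  have e1 : (fun x => (if ((g x : ℝ) : EReal) = ⊥ then (⊤ : ℝ≥0∞)
      else ENNReal.ofReal (-(((g x : ℝ) : EReal)).toReal))) = fun x => ENNReal.ofReal (-(g x)) := by
    funext x
    rw [if_neg (EReal.coe_ne_bot _), EReal.toReal_coe]
  have e2 : (fun x => (if ((g x : ℝ) : EReal) = ⊤ then (⊤ : ℝ≥0∞)
      else ENNReal.ofReal ((((g x : ℝ) : EReal)).toReal))) = fun x => ENNReal.ofReal (g x) := by
    funext x
    rw [if_neg (EReal.coe_ne_top _), EReal.toReal_coe]
  rw [erealIntegral]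
  simp only [e1, e2]
  rw [if_neg hneg, EReal.coe_ennreal_eq_toReal hpos, EReal.coe_ennreal_eq_toReal hneg,
    ← EReal.coe_sub, integral_eq_lintegral_pos_part_sub_lintegral_neg_part hg]

end Aux

section Main
set_option linter.unusedSectionVars false

variable {E : Type*} [NormedAddCommGroup E] [NormedSpace ℝ E] [CompleteSpace E]
  [SecondCountableTopology E] [MeasurableSpace E] [BorelSpace E] [Nonempty E]

lemma integrable_id_of_fin {ν : Measure E}
    (h : ∫⁻ x, ENNReal.ofReal ‖x‖ ∂ν ≠ ⊤) : Integrable (fun z : E => z) ν := by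
  refine ⟨aestronglyMeasurable_id, ?_⟩
  rw [hasFiniteIntegral_iff_norm]
  exact lt_top_iff_ne_top.2 h

lemma erealIntegral_linear (L : E →L[ℝ] ℝ) {ν : Measure E}
    (h : ∫⁻ x, ENNReal.ofReal ‖x‖ ∂ν ≠ ⊤) :
    erealIntegral ν (fun z => ((L z : ℝ) : EReal))
      = ((L (∫ z, z ∂ν) : ℝ) : EReal) := by
  have hid : Integrable (fun z : E => z) ν := integrable_id_of_fin h
  rw [erealIntegral_real (L.integrable_comp hid), L.integral_comp_comm hid]

lemma exists_real_lowerBound (α : ProbabilityMeasure E → EReal) (hbot : ∀ ν, α ν ≠ ⊥)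
    (hcompact : ∀ c : ℝ, IsCompact {ν : ProbabilityMeasure E | α ν ≤ (c : EReal)}) :
    ∃ m : ℝ, ∀ ν, (m : EReal) ≤ α ν := by
  by_contra hcon
  push_neg at hcon
  set K : ℕ → Set (ProbabilityMeasure E) := fun n => {ν | α ν ≤ ((-(n : ℝ) : ℝ) : EReal)} with hK
  have hmono : ∀ {m n : ℕ}, m ≤ n → K n ⊆ K m := by
    intro m n hmn ν hν
    simp only [hK, Set.mem_setOf_eq] at hν ⊢
    exact hν.trans (EReal.coe_le_coe_iff.2 (neg_le_neg (Nat.cast_le.2 hmn)))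
  have hne : ∀ n, (K n).Nonempty := fun n => (hcon (-(n : ℝ))).imp fun ν hν => hν.le
  have hdir : Directed (· ⊇ ·) K := fun m n =>
    ⟨max m n, hmono (le_max_left _ _), hmono (le_max_right _ _)⟩
  obtain ⟨ν, hν⟩ := IsCompact.nonempty_iInter_of_directed_nonempty_isCompact_isClosed K hdir hne
    (fun _ => hcompact _) (fun _ => (hcompact _).isClosed)
  have hν' : ∀ n : ℕ, α ν ≤ ((-(n : ℝ) : ℝ) : EReal) := by
    intro n
    have := Set.mem_iInter.1 hν n
    simpa [hK] using this
  have htop : α ν ≠ ⊤ := by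
    intro h
    have := hν' 0
    rw [h] at this
    exact (EReal.coe_lt_top _).not_ge this
  have hrepr := EReal.coe_toReal htop (hbot ν)
  obtain ⟨n, hn⟩ := exists_nat_gt (-(α ν).toReal)
  have h2 := hν' n
  rw [← hrepr, EReal.coe_le_coe_iff] at h2
  linarith


lemma meanInfAlpha_le (α : ProbabilityMeasure E → EReal) {ν : Pw E (fun z => ‖z‖)} {x : E}
    (hmean : (∫ z, z ∂(ν.toProb : Measure E)) = x) : meanInfAlpha α x ≤ α ν.toProb :=
  iInf₂_le ν hmean

lemma le_meanInfAlpha (α : ProbabilityMeasure E → EReal) {m : ℝ}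
    (hm : ∀ ν, (m : EReal) ≤ α ν) (x : E) : (m : EReal) ≤ meanInfAlpha α x :=
  le_iInf fun _ => le_iInf fun _ => hm _

lemma meanInfAlpha_ne_bot (α : ProbabilityMeasure E → EReal) {m : ℝ}
    (hm : ∀ ν, (m : EReal) ≤ α ν) (x : E) : meanInfAlpha α x ≠ ⊥ :=
  ((EReal.bot_lt_coe m).trans_le (le_meanInfAlpha α hm x)).ne'

lemma conj_eq_rhoE (α : ProbabilityMeasure E → EReal)
    {m : ℝ} (hm : ∀ ν, (m : EReal) ≤ α ν)
    (hdom : ∀ ν : ProbabilityMeasure E, α ν ≠ ⊤ →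
      ∫⁻ x, ENNReal.ofReal (‖x‖) ∂(ν : Measure E) ≠ ⊤)
    (L : E →L[ℝ] ℝ) :
    (⨆ x : E, ((L x : ℝ) : EReal) - meanInfAlpha α x) =
      rhoE α fun z => ((L z : ℝ) : EReal) := by
  apply le_antisymm
  · refine iSup_le fun x => ?_
    by_cases hx : meanInfAlpha α x = ⊤
    · rw [hx, EReal.sub_top]; exact bot_le
    · have hxbot : meanInfAlpha α x ≠ ⊥ := meanInfAlpha_ne_bot α hm x
      set p := (meanInfAlpha α x).toReal with hp
      have hrep : ((p : ℝ) : EReal) = meanInfAlpha α x := EReal.coe_toReal hx hxbot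
      refine le_of_forall_lt_imp_le_of_dense fun c hc => ?_
      rw [← hrep, ← EReal.coe_sub] at hc
      induction c with
      | bot => exact bot_le
      | top => exact absurd hc (not_lt.2 le_top)
      | coe c =>
        rw [EReal.coe_lt_coe_iff] at hc
        have hlt : meanInfAlpha α x < ((L x - c : ℝ) : EReal) := by
          rw [← hrep, EReal.coe_lt_coe_iff]; linarith
        rw [meanInfAlpha, iInf_lt_iff] at hlt
        obtain ⟨ν, hν⟩ := hlt
        rw [iInf_lt_iff] at hν
        obtain ⟨hmean, hν⟩ := hν
        have hint : erealIntegral (ν.toProb : Measure E) (fun z => ((L z : ℝ) : EReal))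
            = ((L x : ℝ) : EReal) := by
          rw [← hmean]
          exact erealIntegral_linear L ν.2
        have : ((c : ℝ) : EReal) ≤ erealIntegral (ν.toProb : Measure E)
            (fun z => ((L z : ℝ) : EReal)) - α ν.toProb := by
          rw [hint]
          calc ((c : ℝ) : EReal) = ((L x : ℝ) : EReal) - ((L x - c : ℝ) : EReal) := by
                rw [← EReal.coe_sub]; norm_num
            _ ≤ ((L x : ℝ) : EReal) - α ν.toProb := EReal.sub_le_sub le_rfl hν.le
        exact this.trans (le_iSup (fun ν' : ProbabilityMeasure E =>
          erealIntegral (ν' : Measure E) (fun z => ((L z : ℝ) : EReal)) - α ν') ν.toProb)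
  · refine iSup_le fun ν => ?_
    by_cases hν : α ν = ⊤
    · rw [hν, EReal.sub_top]; exact bot_le
    · have hfin := hdom ν hν
      rw [erealIntegral_linear L hfin]
      have hle : meanInfAlpha α (∫ z, z ∂(ν : Measure E)) ≤ α ν :=
        meanInfAlpha_le α (ν := ⟨ν, hfin⟩) rfl
      calc ((L (∫ z, z ∂(ν : Measure E)) : ℝ) : EReal) - α ν
          ≤ ((L (∫ z, z ∂(ν : Measure E)) : ℝ) : EReal)
            - meanInfAlpha α (∫ z, z ∂(ν : Measure E)) := EReal.sub_le_sub le_rfl hle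
        _ ≤ _ := le_iSup (fun x : E => ((L x : ℝ) : EReal) - meanInfAlpha α x) _


lemma coe_mul_ne_bot_of_pos {r : ℝ} (hr : 0 < r) {z : EReal} (hz : z ≠ ⊥) :
    (r : EReal) * z ≠ ⊥ := by
  induction z with
  | bot => exact absurd rfl hz
  | top => simp [EReal.coe_mul_top_of_pos hr]
  | coe z => rw [← EReal.coe_mul]; exact EReal.coe_ne_bot _

lemma isProbabilityMeasure_mix (t : ℝ≥0) (ht : t ≤ 1) (μ₁ μ₂ : ProbabilityMeasure E) :
    IsProbabilityMeasure
      ((t : ℝ≥0∞) • (μ₁ : Measure E) + ((1 - t : ℝ≥0) : ℝ≥0∞) • (μ₂ : Measure E)) := by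
  constructor
  rw [Measure.add_apply, Measure.smul_apply, Measure.smul_apply, smul_eq_mul, smul_eq_mul,
    measure_univ, measure_univ, mul_one, mul_one, ← ENNReal.coe_add,
    add_tsub_cancel_of_le ht, ENNReal.coe_one]

lemma meanInfAlpha_convex (α : ProbabilityMeasure E → EReal)
    {m : ℝ} (hm : ∀ ν, (m : EReal) ≤ α ν)
    (hconvex : ∀ (μ₁ μ₂ : ProbabilityMeasure E) (t : ℝ≥0), t ≤ 1 →
      extend α ((t : ℝ≥0∞) • (μ₁ : Measure E) + ((1 - t : ℝ≥0) : ℝ≥0∞) • (μ₂ : Measure E))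
        ≤ ((t : ℝ) : EReal) * α μ₁ + (((1 - t : ℝ≥0) : ℝ) : EReal) * α μ₂)
    (x y : E) (t : ℝ) (ht0 : 0 ≤ t) (ht1 : t ≤ 1) :
    meanInfAlpha α (t • x + (1 - t) • y) ≤
      ((t : ℝ) : EReal) * meanInfAlpha α x + (((1 - t : ℝ)) : EReal) * meanInfAlpha α y := by
  rcases eq_or_lt_of_le ht0 with h0 | h0
  · rw [← h0]
    norm_num
  rcases eq_or_lt_of_le ht1 with h1 | h1
  · rw [h1]
    norm_num
  have h1' : 0 < 1 - t := by linarith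
  by_cases hx : meanInfAlpha α x = ⊤
  · rw [hx, EReal.coe_mul_top_of_pos h0,
      EReal.top_add_of_ne_bot (coe_mul_ne_bot_of_pos h1' (meanInfAlpha_ne_bot α hm y))]
    exact le_top
  by_cases hy : meanInfAlpha α y = ⊤
  · rw [hy, EReal.coe_mul_top_of_pos h1',
      EReal.add_top_of_ne_bot (coe_mul_ne_bot_of_pos h0 (meanInfAlpha_ne_bot α hm x))]
    exact le_top
  -- both finite
  have hxbot := meanInfAlpha_ne_bot α hm x
  have hybot := meanInfAlpha_ne_bot α hm y
  set p := (meanInfAlpha α x).toReal with hpdef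
  set q := (meanInfAlpha α y).toReal with hqdef
  have hp : ((p : ℝ) : EReal) = meanInfAlpha α x := EReal.coe_toReal hx hxbot
  have hq : ((q : ℝ) : EReal) = meanInfAlpha α y := EReal.coe_toReal hy hybot
  rw [← hp, ← hq, ← EReal.coe_mul, ← EReal.coe_mul, ← EReal.coe_add]
  refine le_of_forall_gt_imp_ge_of_dense fun a ha => ?_
  induction a with
  | bot => exact absurd ha (not_lt.2 bot_le)
  | top => exact le_top
  | coe a =>
    rw [EReal.coe_lt_coe_iff] at ha
    set δ : ℝ := a - (t * p + (1 - t) * q) with hδdef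
    have hδ : 0 < δ := by simp only [hδdef]; linarith
    -- pick ν₁
    have hlt₁ : meanInfAlpha α x < ((p + δ : ℝ) : EReal) := by
      rw [← hp, EReal.coe_lt_coe_iff]; linarith
    rw [meanInfAlpha, iInf_lt_iff] at hlt₁
    obtain ⟨ν₁, hlt₁⟩ := hlt₁
    rw [iInf_lt_iff] at hlt₁
    obtain ⟨hmean₁, hα₁⟩ := hlt₁
    have hlt₂ : meanInfAlpha α y < ((q + δ : ℝ) : EReal) := by
      rw [← hq, EReal.coe_lt_coe_iff]; linarith
    rw [meanInfAlpha, iInf_lt_iff] at hlt₂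
    obtain ⟨ν₂, hlt₂⟩ := hlt₂
    rw [iInf_lt_iff] at hlt₂
    obtain ⟨hmean₂, hα₂⟩ := hlt₂
    -- α ν₁, α ν₂ are real
    have hα₁bot : α ν₁.toProb ≠ ⊥ := fun h => by
      have := hm ν₁.toProb; rw [h] at this; exact (EReal.bot_lt_coe m).not_ge this
    have hα₂bot : α ν₂.toProb ≠ ⊥ := fun h => by
      have := hm ν₂.toProb; rw [h] at this; exact (EReal.bot_lt_coe m).not_ge this
    set a₁ := (α ν₁.toProb).toReal with ha₁def
    set a₂ := (α ν₂.toProb).toReal with ha₂def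
    have ha₁ : ((a₁ : ℝ) : EReal) = α ν₁.toProb :=
      EReal.coe_toReal (fun h => by rw [h] at hα₁; exact (not_lt.2 le_top) hα₁) hα₁bot
    have ha₂ : ((a₂ : ℝ) : EReal) = α ν₂.toProb :=
      EReal.coe_toReal (fun h => by rw [h] at hα₂; exact (not_lt.2 le_top) hα₂) hα₂bot
    have ha₁' : a₁ < p + δ := by rw [← ha₁, EReal.coe_lt_coe_iff] at hα₁; exact hα₁
    have ha₂' : a₂ < q + δ := by rw [← ha₂, EReal.coe_lt_coe_iff] at hα₂; exact hα₂
    -- the mixture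
    set t' : ℝ≥0 := ⟨t, ht0⟩ with ht'def
    have ht'1 : t' ≤ 1 := by
      rw [← NNReal.coe_le_coe]; exact ht1
    have ht'coe : ((t' : ℝ≥0∞) : ℝ≥0∞).toReal = t := rfl
    have h1t'coe : (((1 - t' : ℝ≥0) : ℝ≥0∞)).toReal = 1 - t := by
      rw [ENNReal.coe_toReal, NNReal.coe_sub ht'1, NNReal.coe_one]
      rfl
    set μmix : Measure E :=
      (t' : ℝ≥0∞) • (ν₁.toProb : Measure E) + ((1 - t' : ℝ≥0) : ℝ≥0∞) • (ν₂.toProb : Measure E)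
      with hμmixdef
    have hprob : IsProbabilityMeasure μmix := isProbabilityMeasure_mix t' ht'1 _ _
    set νmix : ProbabilityMeasure E := ⟨μmix, hprob⟩ with hνmixdef
    -- finite first moment
    have hmom : ∫⁻ z, ENNReal.ofReal (‖z‖) ∂(νmix : Measure E) ≠ ⊤ := by
      show ∫⁻ z, ENNReal.ofReal (‖z‖) ∂μmix ≠ ⊤
      rw [hμmixdef, lintegral_add_measure, lintegral_smul_measure, lintegral_smul_measure]
      exact ENNReal.add_ne_top.2
        ⟨ENNReal.mul_ne_top ENNReal.coe_ne_top ν₁.2, ENNReal.mul_ne_top ENNReal.coe_ne_top ν₂.2⟩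
    -- integrability
    have hint₁ : Integrable (fun z : E => z) ((t' : ℝ≥0∞) • (ν₁.toProb : Measure E)) :=
      (integrable_id_of_fin ν₁.2).smul_measure ENNReal.coe_ne_top
    have hint₂ : Integrable (fun z : E => z)
        (((1 - t' : ℝ≥0) : ℝ≥0∞) • (ν₂.toProb : Measure E)) :=
      (integrable_id_of_fin ν₂.2).smul_measure ENNReal.coe_ne_top
    -- the mean
    have hmean : ∫ z, z ∂(νmix : Measure E) = t • x + (1 - t) • y := by
      show ∫ z, z ∂μmix = t • x + (1 - t) • y
      rw [hμmixdef, integral_add_measure hint₁ hint₂, integral_smul_measure,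
        integral_smul_measure, ht'coe, h1t'coe, hmean₁, hmean₂]
    -- convexity of α
    have hext : extend α μmix = α νmix := by
      rw [extend, dif_pos hprob]
    have hconv := hconvex ν₁.toProb ν₂.toProb t' ht'1
    rw [← hμmixdef, hext] at hconv
    have hcoe1 : ((t' : ℝ) : EReal) = ((t : ℝ) : EReal) := rfl
    have hcoe2' : ((1 - t' : ℝ≥0) : ℝ) = (1 - t : ℝ) := by
      rw [NNReal.coe_sub ht'1, NNReal.coe_one]
      rfl
    have hcoe2 : (((1 - t' : ℝ≥0) : ℝ) : EReal) = ((1 - t : ℝ) : EReal) := by rw [hcoe2']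
    rw [hcoe1, hcoe2, ← ha₁, ← ha₂, ← EReal.coe_mul, ← EReal.coe_mul, ← EReal.coe_add] at hconv
    -- conclude
    refine le_trans (meanInfAlpha_le α (ν := ⟨νmix, hmom⟩) hmean) (le_trans hconv ?_)
    rw [EReal.coe_le_coe_iff]
    have : t * a₁ + (1 - t) * a₂ ≤ t * (p + δ) + (1 - t) * (q + δ) := by
      have := mul_le_mul_of_nonneg_left ha₁'.le ht0
      have := mul_le_mul_of_nonneg_left ha₂'.le h1'.le
      linarith
    calc t * a₁ + (1 - t) * a₂ ≤ t * (p + δ) + (1 - t) * (q + δ) := this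
      _ = a := by simp only [hδdef]; ring

lemma continuous_integral_Pw {f : E → ℝ} (hf : Continuous f) {C : ℝ}
    (hC : ∀ x, |f x| ≤ C * (1 + ‖x‖)) :
    Continuous fun ν : Pw E (fun z => ‖z‖) => ∫ x, f x ∂(ν.toProb : Measure E) := by
  set M : ℝ := max C 1 with hM
  have hM1 : 1 ≤ M := le_max_right _ _
  have hM0 : 0 < M := lt_of_lt_of_le one_pos hM1
  set g : E → ℝ := fun x => M⁻¹ * f x with hg
  have hgc : Continuous g := continuous_const.mul hf
  have hgb : ∀ x, |g x| ≤ 1 + ‖x‖ := by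
    intro x
    have h1 : |g x| = M⁻¹ * |f x| := by
      rw [hg, abs_mul, abs_inv, abs_of_pos hM0]
    rw [h1]
    calc M⁻¹ * |f x| ≤ M⁻¹ * (M * (1 + ‖x‖)) := by
          refine mul_le_mul_of_nonneg_left ?_ (inv_nonneg.2 hM0.le)
          exact (hC x).trans (mul_le_mul_of_nonneg_right (le_max_left _ _) (by positivity))
      _ = 1 + ‖x‖ := by field_simp
  have hgcont : Continuous fun ν : Pw E (fun z => ‖z‖) => ∫ x, g x ∂(ν.toProb : Measure E) := by
    refine continuous_iInf_dom (i := g) ?_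
    refine continuous_iInf_dom (i := hgc) ?_
    refine continuous_iInf_dom (i := hgb) ?_
    exact continuous_induced_dom
  have heq : (fun ν : Pw E (fun z => ‖z‖) => ∫ x, f x ∂(ν.toProb : Measure E))
      = fun ν : Pw E (fun z => ‖z‖) => M * ∫ x, g x ∂(ν.toProb : Measure E) := by
    funext ν
    rw [hg]
    rw [integral_const_mul, ← mul_assoc, mul_inv_cancel₀ hM0.ne', one_mul]
  rw [heq]
  exact continuous_const.mul hgcont

lemma continuous_toProb :
    Continuous (Pw.toProb : Pw E (fun z => ‖z‖) → ProbabilityMeasure E) := by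
  rw [continuous_iff_continuousAt]
  intro ν
  rw [ContinuousAt, ProbabilityMeasure.tendsto_iff_forall_integral_tendsto]
  intro f
  have hcont : Continuous fun μ : Pw E (fun z => ‖z‖) => ∫ x, f x ∂(μ.toProb : Measure E) := by
    refine continuous_integral_Pw f.continuous (C := ‖f‖) fun x => ?_
    calc |f x| = ‖f x‖ := (Real.norm_eq_abs _).symm
      _ ≤ ‖f‖ := f.norm_coe_le_norm x
      _ ≤ ‖f‖ * (1 + ‖x‖) := le_mul_of_one_le_right (norm_nonneg f) (by linarith [norm_nonneg x])
  exact hcont.continuousAt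

lemma isClosed_sublevel_Pw (α : ProbabilityMeasure E → EReal)
    (hcompact : ∀ c : ℝ, IsCompact {ν : ProbabilityMeasure E | α ν ≤ (c : EReal)}) (c : ℝ) :
    IsClosed {ν : Pw E (fun z => ‖z‖) | α ν.toProb ≤ (c : EReal)} := by
  have : {ν : Pw E (fun z => ‖z‖) | α ν.toProb ≤ (c : EReal)}
      = Pw.toProb ⁻¹' {ν : ProbabilityMeasure E | α ν ≤ (c : EReal)} := rfl
  rw [this]
  exact ((hcompact c).isClosed).preimage continuous_toProb

lemma isCompact_sublevel_Pw (α : ProbabilityMeasure E → EReal)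
    (hcompact : ∀ c : ℝ, IsCompact {ν : ProbabilityMeasure E | α ν ≤ (c : EReal)})
    (hpre : ∀ c : ℝ, IsCompact (closure {ν : Pw E (fun z => ‖z‖) | α ν.toProb ≤ (c : EReal)}))
    (c : ℝ) :
    IsCompact {ν : Pw E (fun z => ‖z‖) | α ν.toProb ≤ (c : EReal)} := by
  rw [← (isClosed_sublevel_Pw α hcompact c).closure_eq]
  exact hpre c

lemma meanInfAlpha_lsc (α : ProbabilityMeasure E → EReal)
    {m : ℝ} (hm : ∀ ν, (m : EReal) ≤ α ν)
    (hcompact : ∀ c : ℝ, IsCompact {ν : ProbabilityMeasure E | α ν ≤ (c : EReal)})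
    (hpre : ∀ c : ℝ, IsCompact (closure {ν : Pw E (fun z => ‖z‖) | α ν.toProb ≤ (c : EReal)})) :
    LowerSemicontinuous (meanInfAlpha α) := by
  rw [lowerSemicontinuous_iff_isClosed_preimage]
  intro y
  induction y with
  | bot =>
    have : meanInfAlpha α ⁻¹' Set.Iic ⊥ = ∅ := by
      refine Set.eq_empty_iff_forall_notMem.2 fun x hx => ?_
      exact meanInfAlpha_ne_bot α hm x (le_bot_iff.1 hx)
    rw [this]
    exact isClosed_empty
  | top =>
    have : meanInfAlpha α ⁻¹' Set.Iic ⊤ = Set.univ := by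
      simp [Set.eq_univ_iff_forall]
    rw [this]
    exact isClosed_univ
  | coe c =>
    rw [← isSeqClosed_iff_isClosed]
    intro xs x hxs hlim
    simp only [Set.mem_preimage, Set.mem_Iic] at hxs ⊢
    -- choose approximating measures
    have hchoice : ∀ n : ℕ, ∃ ν : Pw E (fun z => ‖z‖),
        (∫ z, z ∂(ν.toProb : Measure E)) = xs n ∧
          α ν.toProb < ((c + 1 / (n + 1) : ℝ) : EReal) := by
      intro n
      have hlt : meanInfAlpha α (xs n) < ((c + 1 / (n + 1) : ℝ) : EReal) := by
        refine lt_of_le_of_lt (hxs n) ?_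
        rw [EReal.coe_lt_coe_iff]
        have : (0 : ℝ) < 1 / (n + 1) := by positivity
        linarith
      rw [meanInfAlpha, iInf_lt_iff] at hlt
      obtain ⟨ν, hν⟩ := hlt
      rw [iInf_lt_iff] at hν
      obtain ⟨h1, h2⟩ := hν
      exact ⟨ν, h1, h2⟩
    choose νs hmean hα using hchoice
    -- the compact sub-level set
    have hKcomp : IsCompact {ν : Pw E (fun z => ‖z‖) | α ν.toProb ≤ ((c + 1 : ℝ) : EReal)} :=
      isCompact_sublevel_Pw α hcompact hpre (c + 1)
    set F : Filter (Pw E fun z => ‖z‖) := Filter.map νs Filter.atTop with hF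
    haveI : F.NeBot := Filter.map_neBot
    have hsubN : ∀ N : ℕ, F ≤ Filter.principal
        {ν : Pw E (fun z => ‖z‖) | α ν.toProb ≤ ((c + 1 / (N + 1) : ℝ) : EReal)} := by
      intro N
      rw [Filter.le_principal_iff, hF, Filter.mem_map]
      refine Filter.mem_of_superset (Filter.mem_atTop N) fun n hn => ?_
      simp only [Set.mem_preimage, Set.mem_setOf_eq]
      refine (hα n).le.trans ?_
      rw [EReal.coe_le_coe_iff]
      have h1 : (1 : ℝ) / (n + 1) ≤ 1 / (N + 1) := by
        apply one_div_le_one_div_of_le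
        · positivity
        · have : (N : ℝ) ≤ n := Nat.cast_le.2 hn
          linarith
      linarith
    have hFK : F ≤ Filter.principal
        {ν : Pw E (fun z => ‖z‖) | α ν.toProb ≤ ((c + 1 : ℝ) : EReal)} := by
      refine (hsubN 0).trans (Filter.principal_mono.2 fun ν hν => ?_)
      simp only [Set.mem_setOf_eq] at hν ⊢
      refine hν.trans (EReal.coe_le_coe_iff.2 ?_)
      norm_num
    obtain ⟨ν', hν'K, hcluster⟩ := hKcomp hFK
    -- α ν' ≤ c
    have hsub : ∀ N : ℕ, α ν'.toProb ≤ ((c + 1 / (N + 1) : ℝ) : EReal) := by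
      intro N
      have hclosed := isClosed_sublevel_Pw α hcompact (c + 1 / (N + 1))
      have hmem := mem_closure_iff_clusterPt.2 (hcluster.mono (hsubN N))
      rw [hclosed.closure_eq] at hmem
      exact hmem
    have hαν : α ν'.toProb ≤ (c : EReal) := by
      have hnetop : α ν'.toProb ≠ ⊤ := by
        intro h
        have := hsub 0
        rw [h] at this
        exact (EReal.coe_lt_top _).not_ge this
      have hnebot : α ν'.toProb ≠ ⊥ := fun h => by
        have := hm ν'.toProb
        rw [h] at this
        exact (EReal.bot_lt_coe m).not_ge this
      rw [← EReal.coe_toReal hnetop hnebot, EReal.coe_le_coe_iff]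
      by_contra hcon
      push_neg at hcon
      obtain ⟨N, hN⟩ := exists_nat_one_div_lt (by linarith : (0 : ℝ) < (α ν'.toProb).toReal - c)
      have := hsub N
      rw [← EReal.coe_toReal hnetop hnebot, EReal.coe_le_coe_iff] at this
      have : (α ν'.toProb).toReal ≤ c + 1 / (N + 1) := this
      linarith
    -- the mean of ν' is x
    have hmean' : (∫ z, z ∂(ν'.toProb : Measure E)) = x := by
      rw [NormedSpace.eq_iff_forall_dual_eq ℝ]
      intro L
      set g : Pw E (fun z => ‖z‖) → ℝ := fun ν => ∫ z, L z ∂(ν.toProb : Measure E) with hg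
      have hgcont : Continuous g := by
        refine continuous_integral_Pw L.continuous (C := ‖L‖) fun z => ?_
        calc |L z| = ‖L z‖ := (Real.norm_eq_abs _).symm
          _ ≤ ‖L‖ * ‖z‖ := L.le_opNorm z
          _ ≤ ‖L‖ * (1 + ‖z‖) := by
              refine mul_le_mul_of_nonneg_left ?_ (norm_nonneg L)
              linarith
      have hgcluster : ClusterPt (g ν') (Filter.map g F) :=
        hcluster.map hgcont.continuousAt Filter.tendsto_map
      have hmapeq : Filter.map g F = Filter.map (fun n => L (xs n)) Filter.atTop := by
        rw [hF, Filter.map_map]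
        congr 1
        funext n
        show (∫ z, L z ∂((νs n).toProb : Measure E)) = L (xs n)
        rw [← hmean n]
        exact L.integral_comp_comm (integrable_id_of_fin (νs n).2)
      have htend : Filter.map g F ≤ 𝓝 (L x) := by
        rw [hmapeq]
        exact ((L.continuous.tendsto x).comp hlim)
      have heq : g ν' = L x := t2_iff_nhds.1 inferInstance (hgcluster.mono htend)
      rw [← heq, hg]
      exact (L.integral_comp_comm (integrable_id_of_fin ν'.2)).symm
    exact (meanInfAlpha_le α hmean').trans hαν

lemma meanInfAlpha_biconj (α : ProbabilityMeasure E → EReal)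
    {m : ℝ} (hm : ∀ ν, (m : EReal) ≤ α ν)
    (hproper : ∃ ν, α ν ≠ ⊤)
    (hdom : ∀ ν : ProbabilityMeasure E, α ν ≠ ⊤ →
      ∫⁻ z, ENNReal.ofReal (‖z‖) ∂(ν : Measure E) ≠ ⊤)
    (hconvexPsi : ∀ x y : E, ∀ t : ℝ, 0 ≤ t → t ≤ 1 →
      meanInfAlpha α (t • x + (1 - t) • y) ≤
        ((t : ℝ) : EReal) * meanInfAlpha α x + (((1 - t : ℝ)) : EReal) * meanInfAlpha α y)
    (hlsc : LowerSemicontinuous (meanInfAlpha α)) (x : E) :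
    meanInfAlpha α x = ⨆ L : E →L[ℝ] ℝ, ((L x : ℝ) : EReal) -
      (⨆ y : E, ((L y : ℝ) : EReal) - meanInfAlpha α y) := by
  apply le_antisymm
  swap
  · -- easy direction : sup ≤ Ψ x
    refine iSup_le fun L => ?_
    by_cases hx : meanInfAlpha α x = ⊤
    · rw [hx]; exact le_top
    · have hxbot : meanInfAlpha α x ≠ ⊥ := meanInfAlpha_ne_bot α hm x
      set r := (meanInfAlpha α x).toReal with hr
      have hrep : ((r : ℝ) : EReal) = meanInfAlpha α x := EReal.coe_toReal hx hxbot
      have h1 : ((L x - r : ℝ) : EReal) ≤ ⨆ y : E, ((L y : ℝ) : EReal) - meanInfAlpha α y := by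
        refine le_trans ?_ (le_iSup (fun y : E => ((L y : ℝ) : EReal) - meanInfAlpha α y) x)
        rw [← hrep, ← EReal.coe_sub]
      calc ((L x : ℝ) : EReal) - (⨆ y : E, ((L y : ℝ) : EReal) - meanInfAlpha α y)
          ≤ ((L x : ℝ) : EReal) - ((L x - r : ℝ) : EReal) := EReal.sub_le_sub le_rfl h1
        _ = ((r : ℝ) : EReal) := by rw [← EReal.coe_sub]; norm_num
        _ = meanInfAlpha α x := hrep
  · -- hard direction
    refine le_of_forall_lt_imp_le_of_dense fun cE hcE => ?_
    induction cE with
    | bot => exact bot_le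
    | top => exact absurd hcE (not_lt.2 le_top)
    | coe c =>
    -- the epigraph
    set S : Set (E × ℝ) := {p | meanInfAlpha α p.1 ≤ ((p.2 : ℝ) : EReal)} with hS
    have hSclosed : IsClosed S := by
      have h1 : S = (fun p : E × ℝ => (p.1, ((p.2 : ℝ) : EReal))) ⁻¹'
          {q : E × EReal | meanInfAlpha α q.1 ≤ q.2} := rfl
      rw [h1]
      exact hlsc.isClosed_epigraph.preimage
        (continuous_fst.prodMk (continuous_coe_real_ereal.comp continuous_snd))
    have hSconvex : Convex ℝ S := by
      intro p hp q hq a b ha hb hab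
      have hb' : b = 1 - a := by linarith
      have ha1 : a ≤ 1 := by linarith
      simp only [hS, Set.mem_setOf_eq] at hp hq ⊢
      have hpbot : meanInfAlpha α p.1 ≠ ⊥ := meanInfAlpha_ne_bot α hm p.1
      have hqbot : meanInfAlpha α q.1 ≠ ⊥ := meanInfAlpha_ne_bot α hm q.1
      have hptop : meanInfAlpha α p.1 ≠ ⊤ := fun h => by
        rw [h] at hp; exact (EReal.coe_lt_top _).not_ge hp
      have hqtop : meanInfAlpha α q.1 ≠ ⊤ := fun h => by
        rw [h] at hq; exact (EReal.coe_lt_top _).not_ge hq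
      set r₁ := (meanInfAlpha α p.1).toReal with hr₁
      set r₂ := (meanInfAlpha α q.1).toReal with hr₂
      have hrep₁ : ((r₁ : ℝ) : EReal) = meanInfAlpha α p.1 := EReal.coe_toReal hptop hpbot
      have hrep₂ : ((r₂ : ℝ) : EReal) = meanInfAlpha α q.1 := EReal.coe_toReal hqtop hqbot
      have hr₁le : r₁ ≤ p.2 := by rw [← EReal.coe_le_coe_iff, hrep₁]; exact hp
      have hr₂le : r₂ ≤ q.2 := by rw [← EReal.coe_le_coe_iff, hrep₂]; exact hq
      have hfst : (a • p + b • q).1 = a • p.1 + (1 - a) • q.1 := by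
        rw [hb']; rfl
      have hsnd : (a • p + b • q).2 = a * p.2 + b * q.2 := rfl
      rw [hfst, hsnd]
      refine le_trans (hconvexPsi p.1 q.1 a ha ha1) ?_
      rw [← hrep₁, ← hrep₂, ← EReal.coe_mul, ← EReal.coe_mul, ← EReal.coe_add,
        EReal.coe_le_coe_iff, hb']
      have h1 : a * r₁ ≤ a * p.2 := mul_le_mul_of_nonneg_left hr₁le ha
      have h2 : b * r₂ ≤ b * q.2 := mul_le_mul_of_nonneg_left hr₂le hb
      rw [hb'] at h2
      linarith
    have hnotmem : (x, c) ∉ S := by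
      simp only [hS, Set.mem_setOf_eq]
      exact not_le.2 hcE
    -- a point in S
    obtain ⟨ν₀, hν₀⟩ := hproper
    have hν₀bot : α ν₀ ≠ ⊥ := fun h => by
      have := hm ν₀; rw [h] at this; exact (EReal.bot_lt_coe m).not_ge this
    set x₀ : E := ∫ z, z ∂(ν₀ : Measure E) with hx₀def
    set r₀ : ℝ := (α ν₀).toReal with hr₀def
    have hx₀S : (x₀, r₀) ∈ S := by
      simp only [hS, Set.mem_setOf_eq]
      have h1 : meanInfAlpha α x₀ ≤ α ν₀ := meanInfAlpha_le α (ν := ⟨ν₀, hdom ν₀ hν₀⟩) rfl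
      rw [← EReal.coe_toReal hν₀ hν₀bot] at h1
      exact h1
    -- separation
    obtain ⟨f, u, hfxc, hfS⟩ := geometric_hahn_banach_point_closed hSconvex hSclosed hnotmem
    set g : E →L[ℝ] ℝ := f.comp (ContinuousLinearMap.inl ℝ E ℝ) with hgdef
    set β : ℝ := f (0, 1) with hβdef
    have hf_eq : ∀ p : E × ℝ, f p = g p.1 + p.2 * β := by
      intro p
      have h1 : f (p.1, 0) = g p.1 := rfl
      have h2 : f ((0 : E), p.2) = p.2 * β := by
        have hsm : ((0 : E), p.2) = p.2 • ((0 : E), (1 : ℝ)) := by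
          ext <;> simp
        rw [hsm, ContinuousLinearMap.map_smul, smul_eq_mul, hβdef]
      have h3 : f p = f (p.1, 0) + f ((0 : E), p.2) := by
        rw [← f.map_add]
        congr 1
        ext <;> simp
      rw [h3, h1, h2]
    have hβnn : 0 ≤ β := by
      by_contra hneg
      push_neg at hneg
      set s : ℝ := max 0 ((u - g x₀) / β - r₀) with hsdef
      have hs0 : 0 ≤ s := le_max_left _ _
      have hmemS : (x₀, r₀ + s) ∈ S := by
        simp only [hS, Set.mem_setOf_eq]
        refine le_trans hx₀S (EReal.coe_le_coe_iff.2 (by linarith))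
      have hlt := hfS _ hmemS
      rw [hf_eq] at hlt
      have hlt' : u < g x₀ + (r₀ + s) * β := hlt
      have h1 : (u - g x₀) / β - r₀ ≤ s := le_max_right _ _
      have h2 : (u - g x₀) / β ≤ r₀ + s := by linarith
      rw [div_le_iff_of_neg hneg] at h2
      linarith
    have hfxc' : g x + c * β < u := by
      have := hfxc; rw [hf_eq] at this; exact this
    rcases lt_or_eq_of_le hβnn with hβpos | hβzero
    · -- β > 0
      set L : E →L[ℝ] ℝ := (-(β⁻¹)) • g with hLdef
      have hLy : ∀ y : E, L y = -(β⁻¹) * g y := fun y => rfl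
      have hPhi : (⨆ y : E, ((L y : ℝ) : EReal) - meanInfAlpha α y)
          ≤ ((-u / β : ℝ) : EReal) := by
        refine iSup_le fun y => ?_
        by_cases hy : meanInfAlpha α y = ⊤
        · rw [hy, EReal.sub_top]; exact bot_le
        · have hybot : meanInfAlpha α y ≠ ⊥ := meanInfAlpha_ne_bot α hm y
          set r := (meanInfAlpha α y).toReal with hr
          have hrep : ((r : ℝ) : EReal) = meanInfAlpha α y := EReal.coe_toReal hy hybot
          have hyS : (y, r) ∈ S := by
            simp only [hS, Set.mem_setOf_eq]; rw [hrep]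
          have hlt := hfS _ hyS
          rw [hf_eq] at hlt
          have hlt' : u < g y + r * β := hlt
          rw [← hrep, ← EReal.coe_sub, EReal.coe_le_coe_iff, hLy]
          have hβne : β ≠ 0 := hβpos.ne'
          have hgoal_eq : -β⁻¹ * g y - r = (-(g y) - r * β) / β := by
            field_simp
          rw [hgoal_eq, div_le_div_iff₀ hβpos hβpos]
          have hprod : 0 ≤ (g y + r * β - u) * β := mul_nonneg (by linarith) hβnn
          nlinarith [hprod]
      have hkey : ((c : ℝ) : EReal) ≤ ((L x : ℝ) : EReal) -
          (⨆ y : E, ((L y : ℝ) : EReal) - meanInfAlpha α y) := by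
        have hc2 : c ≤ L x - (-u / β) := by
          have hβne : β ≠ 0 := hβpos.ne'
          have hexp2 : L x - (-u / β) = (u - g x) / β := by
            rw [hLy]
            field_simp
            ring
          rw [hexp2, le_div_iff₀ hβpos]
          linarith
        calc ((c : ℝ) : EReal) ≤ ((L x - (-u / β) : ℝ) : EReal) := EReal.coe_le_coe_iff.2 hc2
          _ = ((L x : ℝ) : EReal) - ((-u / β : ℝ) : EReal) := EReal.coe_sub _ _
          _ ≤ _ := EReal.sub_le_sub le_rfl hPhi
      exact hkey.trans (le_iSup (fun L' : E →L[ℝ] ℝ => ((L' x : ℝ) : EReal) -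
        (⨆ y : E, ((L' y : ℝ) : EReal) - meanInfAlpha α y)) L)
    · -- β = 0
      have hgx : g x < u := by
        rw [← hβzero] at hfxc'
        simpa using hfxc'
      have hgu : 0 < u - g x := by linarith
      obtain ⟨n, hn⟩ := exists_nat_ge ((c - m) / (u - g x))
      set L : E →L[ℝ] ℝ := (-(n : ℝ)) • g with hLdef
      have hLy : ∀ y : E, L y = -(n : ℝ) * g y := fun y => rfl
      have hPhi : (⨆ y : E, ((L y : ℝ) : EReal) - meanInfAlpha α y)
          ≤ ((-(n : ℝ) * u - m : ℝ) : EReal) := by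
        refine iSup_le fun y => ?_
        by_cases hy : meanInfAlpha α y = ⊤
        · rw [hy, EReal.sub_top]; exact bot_le
        · have hybot : meanInfAlpha α y ≠ ⊥ := meanInfAlpha_ne_bot α hm y
          set r := (meanInfAlpha α y).toReal with hr
          have hrep : ((r : ℝ) : EReal) = meanInfAlpha α y := EReal.coe_toReal hy hybot
          have hyS : (y, r) ∈ S := by
            simp only [hS, Set.mem_setOf_eq]; rw [hrep]
          have hlt := hfS _ hyS
          rw [hf_eq] at hlt
          have hlt' : u < g y + r * β := hlt
          rw [← hβzero, mul_zero, add_zero] at hlt'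
          have hrm : m ≤ r := by
            rw [← EReal.coe_le_coe_iff, hrep]
            exact le_meanInfAlpha α hm y
          rw [← hrep, ← EReal.coe_sub, EReal.coe_le_coe_iff, hLy]
          have hnn : (0 : ℝ) ≤ n := Nat.cast_nonneg n
          have hprod : (n : ℝ) * u ≤ (n : ℝ) * g y := mul_le_mul_of_nonneg_left hlt'.le hnn
          linarith
      have hkey : ((c : ℝ) : EReal) ≤ ((L x : ℝ) : EReal) -
          (⨆ y : E, ((L y : ℝ) : EReal) - meanInfAlpha α y) := by
        have hc2 : c ≤ L x - (-(n : ℝ) * u - m) := by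
          rw [hLy]
          rw [div_le_iff₀ hgu] at hn
          have hexp : (n : ℝ) * (u - g x) = (n : ℝ) * u - (n : ℝ) * g x := by ring
          linarith
        calc ((c : ℝ) : EReal) ≤ ((L x - (-(n : ℝ) * u - m) : ℝ) : EReal) :=
            EReal.coe_le_coe_iff.2 hc2
          _ = ((L x : ℝ) : EReal) - ((-(n : ℝ) * u - m : ℝ) : EReal) := EReal.coe_sub _ _
          _ ≤ _ := EReal.sub_le_sub le_rfl hPhi
      exact hkey.trans (le_iSup (fun L' : E →L[ℝ] ℝ => ((L' x : ℝ) : EReal) -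
        (⨆ y : E, ((L' y : ℝ) : EReal) - meanInfAlpha α y)) L)
end Main

/-- **Proposition 2.14**: `Ψ` is convex and lower semicontinuous, its conjugate on `E*` is
`ρ` restricted to `E*`, and `Ψ` is the conjugate of `ρ|_{E*}`. -/
theorem cramer_representation
    {E : Type*} [NormedAddCommGroup E] [NormedSpace ℝ E] [CompleteSpace E]
    [SecondCountableTopology E] [MeasurableSpace E] [BorelSpace E] [Nonempty E]
    (α : ProbabilityMeasure E → EReal)
    (hproper : ∃ ν, α ν ≠ ⊤) (hbot : ∀ ν, α ν ≠ ⊥)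
    (hconvex : ∀ (μ₁ μ₂ : ProbabilityMeasure E) (t : ℝ≥0), t ≤ 1 →
      extend α ((t : ℝ≥0∞) • (μ₁ : Measure E) + ((1 - t : ℝ≥0) : ℝ≥0∞) • (μ₂ : Measure E))
        ≤ ((t : ℝ) : EReal) * α μ₁ + (((1 - t : ℝ≥0) : ℝ) : EReal) * α μ₂)
    (hcompact : ∀ c : ℝ, IsCompact {ν : ProbabilityMeasure E | α ν ≤ (c : EReal)})
    (hpre : (∀ c : ℝ, (∀ ν : ProbabilityMeasure E, α ν ≤ (c : EReal) →
          ∫⁻ x, ENNReal.ofReal (‖x‖) ∂(ν : Measure E) ≠ ⊤) ∧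
        IsCompact (closure {ν : Pw E (fun z => ‖z‖) | α ν.toProb ≤ (c : EReal)}))) :
    -- `Ψ` is convex
    (∀ x y : E, ∀ t : ℝ, 0 ≤ t → t ≤ 1 →
      meanInfAlpha α (t • x + (1 - t) • y) ≤
        ((t : ℝ) : EReal) * meanInfAlpha α x + (((1 - t : ℝ)) : EReal) * meanInfAlpha α y) ∧
    -- `Ψ` is lower semicontinuous
    LowerSemicontinuous (meanInfAlpha α) ∧
    -- `Ψ* = ρ` on `E*`
    (∀ L : E →L[ℝ] ℝ,
      (⨆ x : E, ((L x : ℝ) : EReal) - meanInfAlpha α x) =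
        rhoE α fun z => ((L z : ℝ) : EReal)) ∧
    -- `Ψ` is the conjugate of `ρ|_{E*}`
    (∀ x : E, meanInfAlpha α x =
      ⨆ L : E →L[ℝ] ℝ, ((L x : ℝ) : EReal) - rhoE α fun z => ((L z : ℝ) : EReal)) := by
  obtain ⟨m, hm⟩ := exists_real_lowerBound α hbot hcompact
  have hdom : ∀ ν : ProbabilityMeasure E, α ν ≠ ⊤ →
      ∫⁻ z, ENNReal.ofReal (‖z‖) ∂(ν : Measure E) ≠ ⊤ := fun ν hν =>
    (hpre ((α ν).toReal)).1 ν (EReal.coe_toReal hν (hbot ν)).ge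
  have hconv : ∀ x y : E, ∀ t : ℝ, 0 ≤ t → t ≤ 1 →
      meanInfAlpha α (t • x + (1 - t) • y) ≤
        ((t : ℝ) : EReal) * meanInfAlpha α x + (((1 - t : ℝ)) : EReal) * meanInfAlpha α y :=
    fun x y t ht0 ht1 => meanInfAlpha_convex α hm hconvex x y t ht0 ht1
  have hlsc : LowerSemicontinuous (meanInfAlpha α) :=
    meanInfAlpha_lsc α hm hcompact (fun c => (hpre c).2)
  refine ⟨hconv, hlsc, fun L => conj_eq_rhoE α hm hdom L, fun x => ?_⟩
  rw [meanInfAlpha_biconj α hm hproper hdom hconv hlsc x]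
  exact iSup_congr fun L => by rw [← conj_eq_rhoE α hm hdom L]

end SanovDual
end
end
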